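/- arXiv:2212.01496 — 2 statements merged into one kernel-verified Lean document; each statement's English description precedes it below -/
import Mathlib

section
/- Let F be a function assigning a rational number to each tuple (k_1,...,k_n) of nonnegative integers with k_1 + ... + k_n = n + 1 (for n ≥ 1). Suppose F satisfies: (string equation) if some k_j = 0 then F(k_1,...,k_n) = ∑_{i : k_i > 0} F applied to the tuple of length n-1 obtained by deleting the j-th entry and decreasing k_i by 1; (dilaton equation) if some k_j = 1 then F(k_1,...,k_n) = (n+1) · F applied to the tuple of length n-1 obtained by deleting the j-th entry; and (initial condition) F(2) = 1/24 for n = 1. Then F(k_1,...,k_n) = (1/24) · (n+1)! / (k_1! ⋯ k_n!). -/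
/-!
`(1/24) · multinomial` satisfies the same two recursions as `F`: the string equation is Pascal's
rule `∑ᵢ binom(N - 1; k - eᵢ) = binom(N; k)`, and the dilaton equation is the factor `N` gained by
adjoining a part equal to `1`. A tuple of length `m + 1 ≥ 2` summing to `m + 2 < 2(m + 1)` has an
entry `0` or `1`, so one of the recursions always lowers the length, and induction from `F(2)`
determines `F`.
-/

open Finset Function

namespace Nat

lemma multinomial_map {α β : Type*} (e : β ↪ α) (t : Finset β) (f : α → ℕ) :
    multinomial (t.map e) f = multinomial t (f ∘ e) := by
  simp only [multinomial, sum_map, prod_map, comp_apply]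

theorem multinomial_univ_succAbove {m : ℕ} (k : Fin (m + 1) → ℕ) (j : Fin (m + 1)) :
    multinomial univ k = (∑ i, k i).choose (k j) * multinomial univ (k ∘ j.succAbove) := by
  conv_lhs => rw [Fin.univ_succAbove m j, multinomial_cons, multinomial_map, sum_map]
  rw [Fin.sum_univ_succAbove k j]
  rfl

variable {α : Type*} [DecidableEq α] {s : Finset α} {f : α → ℕ} {i : α}

lemma sum_update_pred (hi : i ∈ s) (hfi : 0 < f i) :
    ∑ l ∈ s, update f i (f i - 1) l = ∑ l ∈ s, f l - 1 := by
  rw [sum_update_of_mem hi, ← add_sum_erase s f hi, ← Finset.erase_eq]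
  omega

lemma prod_factorial_eq_mul_prod_factorial_update_pred (hi : i ∈ s) (hfi : 0 < f i) :
    ∏ l ∈ s, (f l)! = f i * ∏ l ∈ s, (update f i (f i - 1) l)! := by
  simp_rw [apply_update (fun _ n ↦ n !)]
  rw [prod_update_of_mem hi, ← mul_assoc, mul_factorial_pred hfi.ne', sdiff_singleton_eq_erase]
  exact (mul_prod_erase s (fun l ↦ (f l)!) hi).symm

theorem sum_multinomial_update_pred (hf : 0 < ∑ l ∈ s, f l) :
    ∑ i ∈ s with 0 < f i, multinomial s (update f i (f i - 1)) = multinomial s f := by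
  refine Nat.eq_of_mul_eq_mul_left (prod_factorial_pos s f) ?_
  calc (∏ l ∈ s, (f l)!) * ∑ i ∈ s with 0 < f i, multinomial s (update f i (f i - 1))
      = ∑ i ∈ s with 0 < f i, f i * (∑ l ∈ s, f l - 1)! := by
        rw [mul_sum]
        refine sum_congr rfl fun i hi ↦ ?_
        obtain ⟨hi, hfi⟩ := mem_filter.mp hi
        rw [prod_factorial_eq_mul_prod_factorial_update_pred hi hfi, mul_assoc,
          multinomial_spec, sum_update_pred hi hfi]
    _ = (∑ l ∈ s, f l) * (∑ l ∈ s, f l - 1)! := by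
        rw [← sum_mul, sum_filter_of_ne fun l _ h ↦ Nat.pos_of_ne_zero h]
    _ = (∏ l ∈ s, (f l)!) * multinomial s f := by
        rw [mul_factorial_pred hf.ne', multinomial_spec]

end Nat

lemma Fin.exists_le_one_of_sum_lt {m : ℕ} (k : Fin m → ℕ) (h : ∑ i, k i < 2 * m) :
    ∃ j, k j ≤ 1 := by
  obtain ⟨j, -, hj⟩ := exists_lt_of_sum_lt (s := univ) (f := k) (g := fun _ ↦ 2)
    (by simpa [mul_comm] using h)
  exact ⟨j, by omega⟩

/-- Any family satisfying the string equation, dilaton equation and initial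
condition `F(2) = 1/24` equals `(1/24) · binom(n+1; k₁,…,kₙ)`. -/
theorem genus_two_pullback_recursion
    (F : (n : ℕ) → (Fin n → ℕ) → ℚ)
    (hstring : ∀ m : ℕ, 1 ≤ m → ∀ k : Fin (m + 1) → ℕ, (∑ i, k i) = m + 2 →
      ∀ j : Fin (m + 1), k j = 0 →
      F (m + 1) k =
        ∑ i ∈ Finset.univ.filter (fun i : Fin m => 0 < k (j.succAbove i)),
          F m (Function.update (k ∘ j.succAbove) i (k (j.succAbove i) - 1)))
    (hdilaton : ∀ m : ℕ, 1 ≤ m → ∀ k : Fin (m + 1) → ℕ, (∑ i, k i) = m + 2 →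
      ∀ j : Fin (m + 1), k j = 1 →
      F (m + 1) k = (m + 2) * F m (k ∘ j.succAbove))
    (hinit : F 1 ![2] = 1 / 24) :
    ∀ n : ℕ, 1 ≤ n → ∀ k : Fin n → ℕ, (∑ i, k i) = n + 1 →
      F n k = (1 / 24) * (Nat.multinomial Finset.univ k : ℚ) := by
  intro n hn
  induction n, hn using Nat.le_induction with
  | base =>
    intro k hk
    obtain rfl : k = ![2] := by
      ext i
      fin_cases i
      simpa using hk
    rw [hinit, show Nat.multinomial univ ![2] = 1 by decide]
    norm_num
  | succ m hm ih =>
    intro k hk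
    obtain ⟨j, hj⟩ := Fin.exists_le_one_of_sum_lt k (by omega)
    have hsplit : k j + ∑ i, (k ∘ j.succAbove) i = m + 2 := by
      rw [← hk, Fin.sum_univ_succAbove k j, comp_def]
    interval_cases hkj : k j
    · rw [hstring m hm k hk j hkj, Nat.multinomial_univ_succAbove k j, hkj, Nat.choose_zero_right,
        one_mul, ← Nat.sum_multinomial_update_pred (by omega), Nat.cast_sum, mul_sum]
      refine sum_congr rfl fun i hi ↦ ih _ ?_
      refine (Nat.sum_update_pred (f := k ∘ j.succAbove) (mem_univ i)
        (mem_filter.mp hi).2).trans ?_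
      omega
    · rw [hdilaton m hm k hk j hkj, ih _ (by omega), Nat.multinomial_univ_succAbove k j, hkj, hk,
        Nat.choose_one_right]
      push_cast
      ring
end

section
/- Let G be a function assigning a rational number to each tuple (k_1,...,k_n) of nonnegative integers with k_1 + ... + k_n = n - 3 (for n ≥ 3). Suppose G satisfies: G(0,0,0) = 1 for n = 3; and for n ≥ 4, if k_j = 0 for some j, then G(k_1,...,k_n) = ∑_{i ≠ j, k_i > 0} G applied to the (n-1)-tuple obtained by deleting the j-th entry and decreasing k_i by 1. Then G(k_1,...,k_n) = (n-3)! / (k_1! ⋯ k_n!). -/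
open Finset

/-- Cast of multinomial as a quotient of factorials in ℚ. -/
lemma multinomial_cast_eq {m : ℕ} (f : Fin m → ℕ) :
    (Nat.multinomial Finset.univ f : ℚ) =
      (Nat.factorial (∑ i, f i) : ℚ) / ∏ i, (Nat.factorial (f i) : ℚ) := by
  have h := Nat.multinomial_spec Finset.univ f
  have hp : (∏ i, (Nat.factorial (f i) : ℚ)) ≠ 0 := by
    apply Finset.prod_ne_zero_iff.2
    intro i _
    exact_mod_cast (Nat.factorial_pos _).ne'
  rw [eq_div_iff hp]
  have h2 : Nat.multinomial Finset.univ f * ∏ i, Nat.factorial (f i)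
      = Nat.factorial (∑ i, f i) := by rw [mul_comm]; exact h
  exact_mod_cast h2

/-- Deleting a zero entry doesn't change the multinomial coefficient. -/
lemma multinomial_delete_zero {m : ℕ} (k : Fin (m + 1) → ℕ) (j : Fin (m + 1))
    (hj : k j = 0) :
    (Nat.multinomial Finset.univ k : ℚ) =
      (Nat.multinomial Finset.univ (k ∘ j.succAbove) : ℚ) := by
  rw [multinomial_cast_eq, multinomial_cast_eq]
  rw [Fin.sum_univ_succAbove k j, Fin.prod_univ_succAbove (fun i => ((k i).factorial : ℚ)) j,
    hj]
  simp [Function.comp]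

/-- The key recursion for multinomial coefficients. -/
lemma multinomial_rec {m : ℕ} (f : Fin m → ℕ) (hs : 0 < ∑ i, f i) :
    ∑ i ∈ Finset.univ.filter (fun i => 0 < f i),
      (Nat.multinomial Finset.univ (Function.update f i (f i - 1)) : ℚ) =
      (Nat.multinomial Finset.univ f : ℚ) := by
  set s := ∑ i, f i with hsdef
  have hsQ : (s : ℚ) ≠ 0 := by exact_mod_cast hs.ne'
  have key : ∀ i, 0 < f i →
      (Nat.multinomial Finset.univ (Function.update f i (f i - 1)) : ℚ) =
        (f i : ℚ) / s * (Nat.multinomial Finset.univ f : ℚ) := by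
    intro i hi
    rw [multinomial_cast_eq, multinomial_cast_eq]
    have hsum : ∑ j, Function.update f i (f i - 1) j = s - 1 := by
      rw [Finset.sum_update_of_mem (Finset.mem_univ i)]
      have herase : ∑ l ∈ Finset.univ \ {i}, f l + f i = s := by
        rw [Finset.sdiff_singleton_eq_erase, Finset.sum_erase_add _ _ (Finset.mem_univ i)]
      omega
    have hfi : ((f i).factorial : ℚ) = ((f i - 1).factorial : ℚ) * (f i : ℚ) := by
      have h1 := Nat.mul_factorial_pred hi.ne'
      rw [← h1]; push_cast; ring
    have hprod : (∏ j, ((Function.update f i (f i - 1) j).factorial : ℚ)) * (f i : ℚ) =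
        ∏ j, ((f j).factorial : ℚ) := by
      rw [← Finset.mul_prod_erase Finset.univ
            (fun j => ((Function.update f i (f i - 1) j).factorial : ℚ)) (Finset.mem_univ i),
          ← Finset.mul_prod_erase Finset.univ (fun j => ((f j).factorial : ℚ))
            (Finset.mem_univ i)]
      have hrest : ∏ j ∈ Finset.univ.erase i, ((Function.update f i (f i - 1) j).factorial : ℚ)
          = ∏ j ∈ Finset.univ.erase i, ((f j).factorial : ℚ) := by
        refine Finset.prod_congr rfl fun j hj => ?_
        rw [Function.update_of_ne (Finset.ne_of_mem_erase hj)]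
      rw [hrest, Function.update_self, hfi]
      ring
    have hfact : (s.factorial : ℚ) = ((s - 1).factorial : ℚ) * (s : ℚ) := by
      have h1 := Nat.mul_factorial_pred hs.ne'
      rw [← h1]; push_cast; ring
    have hp0 : (∏ j, ((f j).factorial : ℚ)) ≠ 0 := by
      refine Finset.prod_ne_zero_iff.2 fun j _ => ?_
      exact_mod_cast (Nat.factorial_pos _).ne'
    have hp0' : (∏ j, ((Function.update f i (f i - 1) j).factorial : ℚ)) ≠ 0 := by
      refine Finset.prod_ne_zero_iff.2 fun j _ => ?_
      exact_mod_cast (Nat.factorial_pos _).ne'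
    rw [hsum, hfact, ← hprod]
    field_simp
  rw [Finset.sum_congr rfl (fun i hi => key i (Finset.mem_filter.1 hi).2)]
  rw [← Finset.sum_mul, ← Finset.sum_div]
  have hnat : ∑ i ∈ Finset.univ.filter (fun i => 0 < f i), f i = s := by
    rw [hsdef]
    refine Finset.sum_filter_of_ne fun x _ hx => ?_
    omega
  have hsf : ∑ i ∈ Finset.univ.filter (fun i => 0 < f i), (f i : ℚ) = (s : ℚ) := by
    rw [← hnat]; push_cast; rfl
  rw [hsf, div_self hsQ, one_mul]

/-- The string equation together with `G(0,0,0) = 1` determines the genus-0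
intersection numbers: `G(k₁,…,kₙ) = binom(n-3; k₁,…,kₙ)`. -/
theorem genus_zero_recursion
    (G : (n : ℕ) → (Fin n → ℕ) → ℚ)
    (hinit : G 3 (fun _ => 0) = 1)
    (hstring : ∀ m : ℕ, 3 ≤ m → ∀ k : Fin (m + 1) → ℕ, (∑ i, k i) = (m + 1) - 3 →
      ∀ j : Fin (m + 1), k j = 0 →
      G (m + 1) k =
        ∑ i ∈ Finset.univ.filter (fun i : Fin m => 0 < k (j.succAbove i)),
          G m (Function.update (k ∘ j.succAbove) i (k (j.succAbove i) - 1)))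
    : ∀ n : ℕ, 3 ≤ n → ∀ k : Fin n → ℕ, (∑ i, k i) = n - 3 →
      G n k = (Nat.multinomial Finset.univ k : ℚ) := by
  intro n
  induction n with
  | zero => omega
  | succ m IH =>
    intro hn k hk
    rcases Nat.lt_or_ge m 3 with hm | hm
    · -- base case: m + 1 = 3
      interval_cases m
      · omega
      · omega
      · -- n = 3
        have hk0 : k = fun _ => 0 := by
          funext i
          have h3 : ∑ i, k i = 0 := hk
          have := Finset.sum_eq_zero_iff.1 h3 i (Finset.mem_univ i)
          exact this
        rw [hk0, hinit]
        have : Nat.multinomial Finset.univ (fun _ : Fin 3 => 0) = 1 := by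
          simp [Nat.multinomial]
        rw [this]; norm_num
    · -- inductive step
      have hk' : ∑ i, k i = m - 2 := by omega
      -- find j with k j = 0
      have hex : ∃ j, k j = 0 := by
        by_contra h
        push_neg at h
        have : ∀ j, 1 ≤ k j := fun j => Nat.one_le_iff_ne_zero.2 (h j)
        have hle : (m + 1) ≤ ∑ i, k i := by
          calc (m + 1) = ∑ _i : Fin (m + 1), 1 := by simp
          _ ≤ ∑ i, k i := Finset.sum_le_sum (fun i _ => this i)
        omega
      obtain ⟨j, hj⟩ := hex
      have hsumcomp : ∑ i, (k ∘ j.succAbove) i = m - 2 := by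
        have := Fin.sum_univ_succAbove k j
        rw [hj] at this
        simp only [Function.comp]
        omega
      rw [hstring m hm k (by omega) j hj]
      have hterm : ∀ i ∈ Finset.univ.filter (fun i : Fin m => 0 < k (j.succAbove i)),
          G m (Function.update (k ∘ j.succAbove) i (k (j.succAbove i) - 1)) =
          (Nat.multinomial Finset.univ
            (Function.update (k ∘ j.succAbove) i (k (j.succAbove i) - 1)) : ℚ) := by
        intro i hi
        have hipos : 0 < k (j.succAbove i) := (Finset.mem_filter.1 hi).2
        apply IH hm
        rw [Finset.sum_update_of_mem (Finset.mem_univ i)]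
        have herase : ∑ l ∈ Finset.univ \ {i}, (k ∘ j.succAbove) l + (k ∘ j.succAbove) i
            = m - 2 := by
          rw [Finset.sdiff_singleton_eq_erase, Finset.sum_erase_add _ _ (Finset.mem_univ i)]
          exact hsumcomp
        simp only [Function.comp] at herase ⊢
        omega
      rw [Finset.sum_congr rfl hterm]
      rw [multinomial_delete_zero k j hj]
      have := multinomial_rec (k ∘ j.succAbove) (by omega)
      convert this using 2 <;> rfl
end
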